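/- (Theorem 2, dual part.) Let A_j = A_i ∪ {j} with j ∉ A_i, and suppose both G_{A_i} and G_{A_j} have full row rank. Define c_i = c_j, v_i = v_j, and d̃_i = −d̃_j. Then for every θ ∈ ℝⁿ, the extended dual solution obtained by removing constraint j from A_j satisfies λ̃_{A_i}(θ) = λ̃_{A_j}(θ) − d̃_i (c_i + v_iᵀθ) in ℝ^{n_c}. -/

import Mathlib

open Matrix

noncomputable section
namespace MpQP

/-- Submatrix of the rows of `G` indexed by the finite index set `A`. -/
def subRows {nc p : ℕ} (G : Matrix (Fin nc) (Fin p) ℝ) (A : Finset (Fin nc)) :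
    Matrix A (Fin p) ℝ := Matrix.of fun i k => G i.val k

/-- Subvector of `b` indexed by `A`. -/
def subVec {nc : ℕ} (b : Fin nc → ℝ) (A : Finset (Fin nc)) : A → ℝ := fun i => b i.val

/-- `G_A` has full row rank, i.e. the rows of `G` indexed by `A` are linearly independent. -/
def FullRowRank {nc m : ℕ} (G : Matrix (Fin nc) (Fin m) ℝ) (A : Finset (Fin nc)) : Prop :=
  LinearIndependent ℝ (fun i : A => G i.val)

/-- The parametric dual solution `λ_A(θ) = −(G_A H⁻¹ G_Aᵀ)⁻¹ (b_A + S_A θ)`. -/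
def lamOf {m n nc : ℕ} (H : Matrix (Fin m) (Fin m) ℝ) (G : Matrix (Fin nc) (Fin m) ℝ)
    (b : Fin nc → ℝ) (S : Matrix (Fin nc) (Fin n) ℝ) (A : Finset (Fin nc))
    (θ : Fin n → ℝ) : A → ℝ :=
  -((subRows G A * H⁻¹ * (subRows G A)ᵀ)⁻¹.mulVec
      (fun i => b i.val + S.mulVec θ i.val))

/-- The parametric primal solution `z_A(θ) = −H⁻¹ G_Aᵀ λ_A(θ)`. -/
def zOf {m n nc : ℕ} (H : Matrix (Fin m) (Fin m) ℝ) (G : Matrix (Fin nc) (Fin m) ℝ)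
    (b : Fin nc → ℝ) (S : Matrix (Fin nc) (Fin n) ℝ) (A : Finset (Fin nc))
    (θ : Fin n → ℝ) : Fin m → ℝ :=
  -((H⁻¹ * (subRows G A)ᵀ).mulVec (lamOf H G b S A θ))

/-- `λ̃_A(θ) ∈ ℝ^{n_c}`: the dual solution extended by zeros outside `A`. -/
def lamExt {m n nc : ℕ} (H : Matrix (Fin m) (Fin m) ℝ) (G : Matrix (Fin nc) (Fin m) ℝ)
    (b : Fin nc → ℝ) (S : Matrix (Fin nc) (Fin n) ℝ) (A : Finset (Fin nc))
    (θ : Fin n → ℝ) : Fin nc → ℝ :=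
  fun k => if h : k ∈ A then lamOf H G b S A θ ⟨k, h⟩ else 0

/-- `W = G_A H⁻¹ G_Aᵀ`. -/
def Wmat {m nc : ℕ} (H : Matrix (Fin m) (Fin m) ℝ) (G : Matrix (Fin nc) (Fin m) ℝ)
    (A : Finset (Fin nc)) : Matrix A A ℝ :=
  subRows G A * H⁻¹ * (subRows G A)ᵀ

/-- `w = G_A H⁻¹ G_jᵀ`. -/
def wvec {m nc : ℕ} (H : Matrix (Fin m) (Fin m) ℝ) (G : Matrix (Fin nc) (Fin m) ℝ)
    (A : Finset (Fin nc)) (j : Fin nc) : A → ℝ :=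
  (subRows G A * H⁻¹).mulVec (G j)

/-- `w₀ = G_j H⁻¹ G_jᵀ`. -/
def w0 {m nc : ℕ} (H : Matrix (Fin m) (Fin m) ℝ) (G : Matrix (Fin nc) (Fin m) ℝ)
    (j : Fin nc) : ℝ :=
  G j ⬝ᵥ H⁻¹.mulVec (G j)

/-- The Schur complement `C = w₀ − wᵀ W⁻¹ w`. -/
def Cval {m nc : ℕ} (H : Matrix (Fin m) (Fin m) ℝ) (G : Matrix (Fin nc) (Fin m) ℝ)
    (A : Finset (Fin nc)) (j : Fin nc) : ℝ :=
  w0 H G j - wvec H G A j ⬝ᵥ (Wmat H G A)⁻¹.mulVec (wvec H G A j)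

/-- `c_j = C⁻¹ (wᵀ W⁻¹ b_A − b_j)`. -/
def cVal {m nc : ℕ} (H : Matrix (Fin m) (Fin m) ℝ) (G : Matrix (Fin nc) (Fin m) ℝ)
    (b : Fin nc → ℝ) (A : Finset (Fin nc)) (j : Fin nc) : ℝ :=
  (Cval H G A j)⁻¹ * (wvec H G A j ⬝ᵥ (Wmat H G A)⁻¹.mulVec (subVec b A) - b j)

/-- `v_j = C⁻¹ (S_Aᵀ W⁻¹ w − S_jᵀ)`. -/
def vVec {m n nc : ℕ} (H : Matrix (Fin m) (Fin m) ℝ) (G : Matrix (Fin nc) (Fin m) ℝ)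
    (S : Matrix (Fin nc) (Fin n) ℝ) (A : Finset (Fin nc)) (j : Fin nc) : Fin n → ℝ :=
  (Cval H G A j)⁻¹ •
    ((subRows S A)ᵀ.mulVec ((Wmat H G A)⁻¹.mulVec (wvec H G A j)) - S j)

/-- `d̃_j ∈ ℝ^{n_c}`: equal to `W⁻¹ w` on `A`, to `−1` at index `j`, and `0` elsewhere. -/
def dExt {m nc : ℕ} (H : Matrix (Fin m) (Fin m) ℝ) (G : Matrix (Fin nc) (Fin m) ℝ)
    (A : Finset (Fin nc)) (j : Fin nc) : Fin nc → ℝ :=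
  fun k =>
    if h : k ∈ A then (Wmat H G A)⁻¹.mulVec (wvec H G A j) ⟨k, h⟩
    else if k = j then -1 else 0

/-- `f_j = H⁻¹ G_{A ∪ {j}}ᵀ (d̃_j restricted to A ∪ {j})`. -/
def fVec {m nc : ℕ} (H : Matrix (Fin m) (Fin m) ℝ) (G : Matrix (Fin nc) (Fin m) ℝ)
    (A : Finset (Fin nc)) (j : Fin nc) : Fin m → ℝ :=
  (H⁻¹ * (subRows G (insert j A))ᵀ).mulVec (fun i => dExt H G A j i.val)

/-! Write `Q = G H⁻¹ Gᵀ` and `β = b + S θ`. When `G_A` has full row rank, `λ̃_A(θ)` is the unique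
vector supported on `A` such that `Q λ̃_A(θ)` agrees with `-β` on `A`. The vector `d̃_j` is
supported on `A_i ∪ {j}`, and `Q d̃_j` vanishes on `A_i` and equals `-C` at `j`. Hence
`λ̃_{A_i}(θ) - (c_j + v_jᵀθ) d̃_j` satisfies the equations characterising `λ̃_{A_j}(θ)`: on `A_i`
trivially, and at `j` because `C (c_j + v_jᵀθ) = (W⁻¹w)ᵀ β_{A_i} - β_j`. Finally `C ≠ 0`, since
otherwise `d̃_j` would give a nonzero kernel vector of `G_{A_j} H⁻¹ G_{A_j}ᵀ`. -/

end MpQP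

section ZeroExtend

variable {ι R : Type*} [DecidableEq ι]

def zeroExtend [Zero R] (A : Finset ι) (y : A → R) : ι → R :=
  fun k => if h : k ∈ A then y ⟨k, h⟩ else 0

lemma zeroExtend_restrict [Zero R] {A : Finset ι} {x : ι → R} (hx : ∀ k ∉ A, x k = 0) :
    zeroExtend A (fun k : A => x k) = x := by
  ext k
  by_cases hk : k ∈ A <;> simp [zeroExtend, hk, hx]

variable [Fintype ι] [NonUnitalNonAssocSemiring R]

lemma dotProduct_zeroExtend (A : Finset ι) (v : ι → R) (y : A → R) :
    v ⬝ᵥ zeroExtend A y = (fun k : A => v k) ⬝ᵥ y := by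
  calc v ⬝ᵥ zeroExtend A y = ∑ k ∈ A, v k * zeroExtend A y k :=
        (Finset.sum_subset (Finset.subset_univ A) fun k _ hk => by simp [zeroExtend, hk]).symm
    _ = ∑ k : A, v k * y k := by
        rw [← Finset.sum_coe_sort]
        exact Finset.sum_congr rfl fun k _ => by simp [zeroExtend]

lemma submatrix_mulVec_eq_mulVec_zeroExtend (Q : Matrix ι ι R) (A : Finset ι) (y : A → R) :
    Q.submatrix (↑) (↑) *ᵥ y = fun k : A => (Q *ᵥ zeroExtend A y) k := by
  ext k
  exact (dotProduct_zeroExtend A (Q k) y).symm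

end ZeroExtend

lemma Matrix.IsSymm.dotProduct_mulVec_comm {ι R : Type*} [Fintype ι] [CommSemiring R]
    {M : Matrix ι ι R} (hM : M.IsSymm) (v x : ι → R) : v ⬝ᵥ M *ᵥ x = M *ᵥ v ⬝ᵥ x := by
  rw [Matrix.dotProduct_mulVec, ← Matrix.mulVec_transpose, hM.eq]

namespace MpQP

section

variable {m n nc : ℕ}

def gram (H : Matrix (Fin m) (Fin m) ℝ) (G : Matrix (Fin nc) (Fin m) ℝ) :
    Matrix (Fin nc) (Fin nc) ℝ :=
  G * H⁻¹ * Gᵀ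

lemma gram_apply (H : Matrix (Fin m) (Fin m) ℝ) (G : Matrix (Fin nc) (Fin m) ℝ) (k l : Fin nc) :
    gram H G k l = G k ⬝ᵥ H⁻¹ *ᵥ G l := by
  rw [Matrix.dotProduct_mulVec]
  rfl

lemma gram_isSymm {H : Matrix (Fin m) (Fin m) ℝ} (hH : H.IsSymm)
    (G : Matrix (Fin nc) (Fin m) ℝ) : (gram H G).IsSymm := by
  simp [gram, Matrix.IsSymm, Matrix.transpose_mul, Matrix.transpose_nonsing_inv, hH.eq,
    Matrix.mul_assoc]

lemma Wmat_eq_submatrix (H : Matrix (Fin m) (Fin m) ℝ) (G : Matrix (Fin nc) (Fin m) ℝ)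
    (A : Finset (Fin nc)) : Wmat H G A = (gram H G).submatrix (↑) (↑) := by
  ext k l
  simp [Wmat, gram, subRows, Matrix.mul_apply]

lemma wvec_eq (H : Matrix (Fin m) (Fin m) ℝ) (G : Matrix (Fin nc) (Fin m) ℝ)
    (A : Finset (Fin nc)) (j : Fin nc) : wvec H G A j = fun k : A => gram H G k j := by
  ext k
  rw [gram_apply, wvec, ← Matrix.mulVec_mulVec]
  rfl

lemma wvec_eq_gram_row {H : Matrix (Fin m) (Fin m) ℝ} (hH : H.IsSymm)
    (G : Matrix (Fin nc) (Fin m) ℝ) (A : Finset (Fin nc)) (j : Fin nc) :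
    wvec H G A j = fun k : A => gram H G j k := by
  rw [wvec_eq]
  ext k
  exact ((gram_isSymm hH G).apply k j).symm

lemma w0_eq (H : Matrix (Fin m) (Fin m) ℝ) (G : Matrix (Fin nc) (Fin m) ℝ) (j : Fin nc) :
    w0 H G j = gram H G j j :=
  (gram_apply H G j j).symm

variable {H : Matrix (Fin m) (Fin m) ℝ} {G : Matrix (Fin nc) (Fin m) ℝ}
  {A : Finset (Fin nc)} {j : Fin nc}

lemma Wmat_posDef (hH : H.PosDef) (hA : FullRowRank G A) : (Wmat H G A).PosDef := by
  simpa [Wmat] using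
    hH.inv.mul_mul_conjTranspose_same (B := subRows G A) (Matrix.vecMul_injective_iff.mpr hA)

lemma isUnit_det_Wmat (hH : H.PosDef) (hA : FullRowRank G A) : IsUnit (Wmat H G A).det :=
  (Wmat_posDef hH hA).det_pos.ne'.isUnit

lemma Wmat_inv_isSymm (hH : H.IsSymm) : (Wmat H G A)⁻¹.IsSymm := by
  rw [Wmat_eq_submatrix]
  exact ((gram_isSymm hH G).submatrix _).inv

lemma Wmat_mulVec (y : A → ℝ) :
    Wmat H G A *ᵥ y = fun k : A => (gram H G *ᵥ zeroExtend A y) k := by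
  rw [Wmat_eq_submatrix, submatrix_mulVec_eq_mulVec_zeroExtend]

lemma lamOf_eq (b : Fin nc → ℝ) (S : Matrix (Fin nc) (Fin n) ℝ) (θ : Fin n → ℝ) :
    lamOf H G b S A θ = -((Wmat H G A)⁻¹ *ᵥ fun k : A => (b + S *ᵥ θ) k) :=
  rfl

lemma lamOf_eq_iff (hW : IsUnit (Wmat H G A).det) (b : Fin nc → ℝ)
    (S : Matrix (Fin nc) (Fin n) ℝ) (θ : Fin n → ℝ) (y : A → ℝ) :
    lamOf H G b S A θ = y ↔ Wmat H G A *ᵥ y = -fun k : A => (b + S *ᵥ θ) k := by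
  constructor
  · rintro rfl
    rw [lamOf_eq, Matrix.mulVec_neg, Matrix.mulVec_mulVec, Matrix.mul_nonsing_inv _ hW,
      Matrix.one_mulVec]
  · intro h
    rw [lamOf_eq, ← Matrix.mulVec_neg, ← h, Matrix.mulVec_mulVec, Matrix.nonsing_inv_mul _ hW,
      Matrix.one_mulVec]

lemma lamExt_eq_zeroExtend (b : Fin nc → ℝ) (S : Matrix (Fin nc) (Fin n) ℝ) (θ : Fin n → ℝ) :
    lamExt H G b S A θ = zeroExtend A (lamOf H G b S A θ) :=
  rfl

lemma lamExt_eq_of_gram_mulVec (hW : IsUnit (Wmat H G A).det) {b : Fin nc → ℝ}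
    {S : Matrix (Fin nc) (Fin n) ℝ} {θ : Fin n → ℝ} {x : Fin nc → ℝ} (hx : ∀ k ∉ A, x k = 0)
    (h : ∀ k ∈ A, (gram H G *ᵥ x) k = -(b + S *ᵥ θ) k) : lamExt H G b S A θ = x := by
  have hy : lamOf H G b S A θ = fun k : A => x k := by
    rw [lamOf_eq_iff hW, Wmat_mulVec, zeroExtend_restrict hx]
    ext k
    exact h k k.2
  rw [lamExt_eq_zeroExtend, hy, zeroExtend_restrict hx]

lemma gram_mulVec_lamExt_of_mem (hW : IsUnit (Wmat H G A).det) (b : Fin nc → ℝ)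
    (S : Matrix (Fin nc) (Fin n) ℝ) (θ : Fin n → ℝ) {k : Fin nc} (hk : k ∈ A) :
    (gram H G *ᵥ lamExt H G b S A θ) k = -(b + S *ᵥ θ) k := by
  have := congrFun ((lamOf_eq_iff hW b S θ _).mp rfl) ⟨k, hk⟩
  rwa [Wmat_mulVec] at this

lemma gram_mulVec_lamExt_apply (hH : H.IsSymm) (b : Fin nc → ℝ)
    (S : Matrix (Fin nc) (Fin n) ℝ) (θ : Fin n → ℝ) (j : Fin nc) :
    (gram H G *ᵥ lamExt H G b S A θ) j =
      -((Wmat H G A)⁻¹ *ᵥ wvec H G A j ⬝ᵥ fun k : A => (b + S *ᵥ θ) k) := by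
  rw [lamExt_eq_zeroExtend, Matrix.mulVec, dotProduct_zeroExtend, ← wvec_eq_gram_row hH,
    lamOf_eq, dotProduct_neg, Matrix.IsSymm.dotProduct_mulVec_comm (Wmat_inv_isSymm hH)]

lemma dExt_eq (hj : j ∉ A) :
    dExt H G A j = zeroExtend A ((Wmat H G A)⁻¹ *ᵥ wvec H G A j) - Pi.single j 1 := by
  ext k
  by_cases hk : k ∈ A
  · simp [dExt, zeroExtend, hk, ne_of_mem_of_not_mem hk hj]
  · by_cases hkj : k = j
    · subst hkj
      simp [dExt, zeroExtend, hk]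
    · simp [dExt, zeroExtend, hk, hkj]

lemma dExt_of_notMem {k : Fin nc} (hk : k ∉ insert j A) : dExt H G A j k = 0 := by
  rw [Finset.mem_insert, not_or] at hk
  simp [dExt, hk.1, hk.2]

lemma gram_mulVec_dExt_of_mem (hW : IsUnit (Wmat H G A).det) (hj : j ∉ A) {k : Fin nc}
    (hk : k ∈ A) : (gram H G *ᵥ dExt H G A j) k = 0 := by
  have hWp : Wmat H G A *ᵥ ((Wmat H G A)⁻¹ *ᵥ wvec H G A j) = wvec H G A j := by
    rw [Matrix.mulVec_mulVec, Matrix.mul_nonsing_inv _ hW, Matrix.one_mulVec]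
  have := congrFun hWp ⟨k, hk⟩
  rw [Wmat_mulVec] at this
  rw [dExt_eq hj, Matrix.mulVec_sub, Matrix.mulVec_single_one, Pi.sub_apply, Matrix.col_apply,
    sub_eq_zero]
  exact this.trans (congrFun (wvec_eq H G A j) ⟨k, hk⟩)

lemma gram_mulVec_dExt_self (hH : H.IsSymm) (hj : j ∉ A) :
    (gram H G *ᵥ dExt H G A j) j = -Cval H G A j := by
  rw [dExt_eq hj, Matrix.mulVec_sub, Matrix.mulVec_single_one, Pi.sub_apply, Matrix.col_apply,
    Matrix.mulVec, dotProduct_zeroExtend, ← wvec_eq_gram_row hH, Cval, w0_eq]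
  ring

lemma Cval_ne_zero (hH : H.IsSymm) (hj : j ∉ A) (hWA : IsUnit (Wmat H G A).det)
    (hWjA : IsUnit (Wmat H G (insert j A)).det) : Cval H G A j ≠ 0 := by
  intro hC
  have hd : Wmat H G (insert j A) *ᵥ (fun k : (insert j A : Finset (Fin nc)) => dExt H G A j k)
      = 0 := by
    rw [Wmat_mulVec, zeroExtend_restrict fun k => dExt_of_notMem]
    ext ⟨k, hk⟩
    rcases Finset.mem_insert.mp hk with rfl | hk
    · simp [gram_mulVec_dExt_self hH hj, hC]
    · exact gram_mulVec_dExt_of_mem hWA hj hk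
  have := congrFun (Matrix.eq_zero_of_mulVec_eq_zero hWjA.ne_zero hd)
    ⟨j, Finset.mem_insert_self j A⟩
  simp [dExt, hj] at this

lemma cVal_add_vVec_dotProduct (hH : H.IsSymm) (b : Fin nc → ℝ) (S : Matrix (Fin nc) (Fin n) ℝ)
    (θ : Fin n → ℝ) :
    cVal H G b A j + vVec H G S A j ⬝ᵥ θ = (Cval H G A j)⁻¹ *
      ((Wmat H G A)⁻¹ *ᵥ wvec H G A j ⬝ᵥ (fun k : A => (b + S *ᵥ θ) k) - (b + S *ᵥ θ) j) := by
  have hb : wvec H G A j ⬝ᵥ (Wmat H G A)⁻¹ *ᵥ subVec b A =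
      (Wmat H G A)⁻¹ *ᵥ wvec H G A j ⬝ᵥ subVec b A :=
    Matrix.IsSymm.dotProduct_mulVec_comm (Wmat_inv_isSymm hH) _ _
  have hS (p : A → ℝ) : (subRows S A)ᵀ *ᵥ p ⬝ᵥ θ = p ⬝ᵥ fun k : A => (S *ᵥ θ) k := by
    rw [Matrix.mulVec_transpose, ← Matrix.dotProduct_mulVec]
    rfl
  have hsplit : (fun k : A => (b + S *ᵥ θ) k) = subVec b A + fun k : A => (S *ᵥ θ) k := rfl
  rw [cVal, vVec, hb, smul_dotProduct, sub_dotProduct, hS, hsplit, dotProduct_add, smul_eq_mul,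
    Pi.add_apply, show S j ⬝ᵥ θ = (S *ᵥ θ) j from rfl]
  ring

lemma lamExt_insert (hH : H.IsSymm) (hj : j ∉ A) (hWA : IsUnit (Wmat H G A).det)
    (hWjA : IsUnit (Wmat H G (insert j A)).det) (b : Fin nc → ℝ)
    (S : Matrix (Fin nc) (Fin n) ℝ) (θ : Fin n → ℝ) :
    lamExt H G b S (insert j A) θ =
      lamExt H G b S A θ - (cVal H G b A j + vVec H G S A j ⬝ᵥ θ) • dExt H G A j := by
  have hC := Cval_ne_zero hH hj hWA hWjA
  apply lamExt_eq_of_gram_mulVec hWjA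
  · intro k hk
    rw [Pi.sub_apply, Pi.smul_apply, dExt_of_notMem hk, smul_zero, sub_zero]
    exact dif_neg fun h => hk (Finset.mem_insert_of_mem h)
  · intro k hk
    rw [Matrix.mulVec_sub, Matrix.mulVec_smul, Pi.sub_apply, Pi.smul_apply, smul_eq_mul]
    rcases Finset.mem_insert.mp hk with rfl | hk
    · rw [gram_mulVec_lamExt_apply hH, gram_mulVec_dExt_self hH hj, cVal_add_vVec_dotProduct hH]
      field_simp
      ring
    · rw [gram_mulVec_lamExt_of_mem hWA _ _ _ hk, gram_mulVec_dExt_of_mem hWA hj hk, mul_zero,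
        sub_zero]

end

/-- Theorem 2, dual part: removing constraint `j` from `A_j = A_i ∪ {j}` gives
`λ̃_{A_i}(θ) = λ̃_{A_j}(θ) − (c_i + v_iᵀθ) d̃_i`, where `c_i = c_j`, `v_i = v_j`
and `d̃_i = −d̃_j`. -/
theorem dual_rankOne_update_remove
    {m n nc : ℕ} (H : Matrix (Fin m) (Fin m) ℝ) (hH : H.PosDef)
    (G : Matrix (Fin nc) (Fin m) ℝ) (b : Fin nc → ℝ) (S : Matrix (Fin nc) (Fin n) ℝ)
    (Ai : Finset (Fin nc)) (j : Fin nc) (hj : j ∉ Ai)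
    (hAi : FullRowRank G Ai) (hAj : FullRowRank G (insert j Ai))
    (ci : ℝ) (hci : ci = cVal H G b Ai j)
    (vi : Fin n → ℝ) (hvi : vi = vVec H G S Ai j)
    (di : Fin nc → ℝ) (hdi : di = -dExt H G Ai j) :
    ∀ θ : Fin n → ℝ,
      lamExt H G b S Ai θ =
        lamExt H G b S (insert j Ai) θ - (ci + vi ⬝ᵥ θ) • di := by
  intro θ
  subst hci hvi hdi
  rw [lamExt_insert (Matrix.isHermitian_iff_isSymm.mp hH.isHermitian) hj
    (isUnit_det_Wmat hH hAi) (isUnit_det_Wmat hH hAj), smul_neg, sub_neg_eq_add, sub_add_cancel]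

end MpQP
end
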